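/- Let G be a connected graph with matching number ν(G) and n vertices. Then η_per(G) = n − 2ν(G) if and only if either G has a perfect matching or the subgraph of G induced by D(G) has no edges, where D(G) is the set of vertices missed by at least one maximum matching of G. -/

import Mathlib

open Polynomial SimpleGraph

open scoped Classical in
/-- The permanental polynomial `per(xI - A(G))` of a graph. -/
noncomputable def permPoly {V : Type*} [Fintype V] (G : SimpleGraph V) : Polynomial ℤ :=
  Matrix.permanent
    ((Polynomial.X : ℤ[X]) • (1 : Matrix V V ℤ[X]) -
      Matrix.of fun i j => if G.Adj i j then (1 : ℤ[X]) else 0)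

/-- The permanental nullity: multiplicity of 0 as a root of the permanental polynomial. -/
noncomputable def perNullity {V : Type*} [Fintype V] (G : SimpleGraph V) : ℕ :=
  (permPoly G).rootMultiplicity 0

/-- Degree of a vertex in a subgraph. -/
noncomputable def subDeg {V : Type*} {G : SimpleGraph V} (H : G.Subgraph) (v : V) : ℕ :=
  (H.neighborSet v).ncard

/-- A Sachs subgraph: every component is a single edge or a cycle. -/
def IsSachs {V : Type*} {G : SimpleGraph V} (H : G.Subgraph) : Prop :=
  (∀ v ∈ H.verts, subDeg H v = 1 ∨ subDeg H v = 2) ∧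
    ∀ u v, H.Adj u v → subDeg H u = 1 → subDeg H v ≠ 2

/-- Number of cycle components of a Sachs subgraph. -/
noncomputable def cyclesCount {V : Type*} {G : SimpleGraph V} (H : G.Subgraph) : ℕ :=
  H.edgeSet.ncard + Nat.card H.coe.ConnectedComponent - H.verts.ncard

/-- Matching number. -/
noncomputable def matchingNumber {V : Type*} [Fintype V] (G : SimpleGraph V) : ℕ :=
  sSup {n | ∃ M : G.Subgraph, M.IsMatching ∧ M.edgeSet.ncard = n}

/-- A maximum matching. -/
def IsMaximumMatching {V : Type*} {G : SimpleGraph V} (M : G.Subgraph) : Prop :=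
  M.IsMatching ∧ ∀ N : G.Subgraph, N.IsMatching → N.edgeSet.ncard ≤ M.edgeSet.ncard

/-- `D(G)`: vertices missed by at least one maximum matching. -/
def DSet {V : Type*} (G : SimpleGraph V) : Set V :=
  {v | ∃ M : G.Subgraph, IsMaximumMatching M ∧ v ∉ M.verts}

/-- `B(G)`: vertices outside `D(G)` adjacent to `D(G)`. -/
def BSet {V : Type*} (G : SimpleGraph V) : Set V :=
  {v | v ∉ DSet G ∧ ∃ u ∈ DSet G, G.Adj v u}

/-- `C(G)`. -/
def CSet {V : Type*} (G : SimpleGraph V) : Set V :=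
  (DSet G ∪ BSet G)ᶜ

/-- Factor-critical graph. -/
def IsFactorCritical {W : Type*} (H : SimpleGraph W) : Prop :=
  ∀ v : W, ∃ M : (H.induce ({v}ᶜ : Set W)).Subgraph, M.IsPerfectMatching

/-!
Expanding the permanent, `per(xI - A) = ∑ (-1)^|supp σ| x^(n - |supp σ|)`, the sum running over
the permutations `σ` that move each vertex they move to a neighbour. All terms of one degree have
the same sign, so `η_per = n - s`, where `s` is the largest support of such a `σ`; a maximum
matching shows `2ν ≤ s`, and `s = n = 2ν` when it is perfect.

If `D = D(G)` is independent, such a `σ` maps the vertices of `D` it moves injectively into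
`B(G)`, while every maximum matching maps `B(G)` injectively into `D`; counting gives
`s ≤ 2ν`. If instead `x, z ∈ D` are adjacent, take maximum matchings missing `x` and `z`
respectively. Their alternating path from `z` must end at `x`, as otherwise flipping it would
leave both `x` and `z` uncovered; closed up by the edge `xz` it is an odd cycle, which together
with the first matching off the path covers `2ν + 1` vertices, so `s > 2ν`.

Matchings are encoded as involutive permutations, and alternating paths are walked one edge
at a time by moving the uncovered vertex of a maximum matching along them.
-/

section

open scoped Classical

namespace SimpleGraph.Subgraph

variable {V : Type*} {G : SimpleGraph V} {M : G.Subgraph}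

theorem IsMatching.ncard_verts [Finite V] (hM : M.IsMatching) :
    M.verts.ncard = 2 * M.edgeSet.ncard := by
  have := Fintype.ofFinite V
  have hsum := M.coe.sum_degrees_eq_twice_card_edges
  rw [Finset.sum_congr rfl (g := fun _ => 1) fun v _ => by
    convert (coe_degree M v).trans (degree_eq_one_iff_existsUnique_adj.2 (hM v.2))] at hsum
  rw [← Nat.card_coe_set_eq, Nat.card_eq_fintype_card, ← Finset.card_univ,
    Finset.card_eq_sum_ones, hsum, ← image_coe_edgeSet_coe,
    Set.ncard_image_of_injective _ (Sym2.map.injective Subtype.val_injective),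
    ← coe_edgeFinset, Set.ncard_coe_finset]

end SimpleGraph.Subgraph

open Finset Equiv

variable {V : Type*} {G : SimpleGraph V}

/-- The cycles of such a permutation are edges and cycles of `G`: it is an oriented Sachs
subgraph. -/
def MovesAlongEdges (G : SimpleGraph V) (σ : Perm V) : Prop :=
  ∀ v, σ v ≠ v → G.Adj v (σ v)

/-- A matching, encoded as the involution exchanging the ends of each of its edges. -/
structure IsPairing (G : SimpleGraph V) (f : Perm V) : Prop where
  involutive : Function.Involutive f
  movesAlongEdges : MovesAlongEdges G f

namespace IsPairing

variable {f : Perm V}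

def toSubgraph (hf : IsPairing G f) : G.Subgraph where
  verts := {v | f v ≠ v}
  Adj u v := f u = v ∧ u ≠ v
  adj_sub := by rintro u _ ⟨rfl, h⟩; exact hf.movesAlongEdges u h.symm
  edge_vert := by rintro u _ ⟨rfl, h⟩; exact h.symm
  symm := ⟨by rintro u _ ⟨rfl, h⟩; exact ⟨hf.involutive u, h.symm⟩⟩

theorem toSubgraph_isMatching (hf : IsPairing G f) : hf.toSubgraph.IsMatching :=
  fun v hv => ⟨f v, ⟨rfl, Ne.symm hv⟩, fun _ h => h.1.symm⟩

theorem mul_swap (hf : IsPairing G f) {a b : V} (ha : f a = a) (hb : f b = b)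
    (hab : G.Adj a b) : IsPairing G (f * swap a b) := by
  have hfix {v : V} (hva : v ≠ a) (hvb : v ≠ b) : f v ≠ a ∧ f v ≠ b :=
    ⟨fun h => hva (f.injective (h.trans ha.symm)), fun h => hvb (f.injective (h.trans hb.symm))⟩
  refine ⟨fun v => ?_, fun v hv => ?_⟩
  · by_cases hva : v = a
    · simp [hva, ha, hb]
    by_cases hvb : v = b
    · simp [hvb, ha, hb]
    simp [swap_apply_of_ne_of_ne, hva, hvb, (hfix hva hvb).1, (hfix hva hvb).2, hf.involutive v]
  · by_cases hva : v = a
    · simpa [hva, hb] using hab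
    by_cases hvb : v = b
    · simpa [hvb, ha] using hab.symm
    simp only [Perm.mul_apply, swap_apply_of_ne_of_ne hva hvb] at hv ⊢
    exact hf.movesAlongEdges v hv

/-- The first steps `z, f z, h (f z)` of the alternating path from `z` lie where `f` and `h`
differ. -/
theorem ne_of_apply_eq {h : Perm V} (hf : IsPairing G f) (hh : IsPairing G h) {z v : V}
    (hz : h z = z) (hfz : f z ≠ z) (hv : f v = h v) :
    v ≠ z ∧ v ≠ f z ∧ v ≠ h (f z) := by
  have hhfz : h (f z) ≠ z := fun h' => hfz (h.injective (h'.trans hz.symm))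
  refine ⟨fun hvz => hfz (hvz ▸ hv.trans (hvz ▸ hz)), fun hva => ?_, fun hvb => ?_⟩
  · exact hhfz (by rw [← hva, ← hv, hva, hf.involutive])
  · have : f v = f z := by rw [hv, hvb, hh.involutive]
    exact hhfz (hvb ▸ f.injective this)

theorem card_support_eq_two_mul [Fintype V] (hf : IsPairing G f) :
    #f.support = 2 * hf.toSubgraph.edgeSet.ncard := by
  rw [← hf.toSubgraph_isMatching.ncard_verts, ← Set.ncard_coe_finset]
  congr 1
  ext v
  simp [toSubgraph]

end IsPairing

section MaximumMatchings

variable [Fintype V]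

theorem SimpleGraph.Subgraph.IsMatching.exists_isPairing {M : G.Subgraph} (hM : M.IsMatching) :
    ∃ f, IsPairing G f ∧ (∀ v, f v ≠ v ↔ v ∈ M.verts) ∧
      #f.support = 2 * M.edgeSet.ncard := by
  choose! p hp huniq using fun v (hv : v ∈ M.verts) => hM hv
  set q : V → V := fun v => if v ∈ M.verts then p v else v
  have hq_adj {v : V} (hv : v ∈ M.verts) : M.Adj v (q v) := by simpa [q, hv] using hp v hv
  have hq_inv : Function.Involutive q := fun v => by
    by_cases hv : v ∈ M.verts
    · have hadj := hq_adj hv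
      simpa [q, hadj.snd_mem] using (huniq _ hadj.snd_mem v hadj.symm).symm
    · simp [q, hv]
  have hq_ne (v : V) : q v ≠ v ↔ v ∈ M.verts := by
    by_cases hv : v ∈ M.verts
    · simpa [hv] using (M.adj_sub (hq_adj hv)).ne'
    · simp [q, hv]
  refine ⟨hq_inv.toPerm, ⟨hq_inv, fun v hv => M.adj_sub (hq_adj ((hq_ne v).1 hv))⟩, hq_ne,
    ?_⟩
  rw [← hM.ncard_verts, ← Set.ncard_coe_finset]
  congr 1
  ext v
  simp [hq_ne]

theorem bddAbove_ncard_edgeSet_isMatching (G : SimpleGraph V) :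
    BddAbove {n | ∃ M : G.Subgraph, M.IsMatching ∧ M.edgeSet.ncard = n} := by
  refine ⟨Nat.card V, ?_⟩
  rintro _ ⟨M, hM, rfl⟩
  have := hM.ncard_verts
  have := M.verts.ncard_le_card
  omega

theorem SimpleGraph.Subgraph.IsMatching.ncard_edgeSet_le_matchingNumber {M : G.Subgraph}
    (hM : M.IsMatching) : M.edgeSet.ncard ≤ matchingNumber G :=
  le_csSup (bddAbove_ncard_edgeSet_isMatching G) ⟨M, hM, rfl⟩

theorem exists_isMatching_ncard_edgeSet_eq_matchingNumber (G : SimpleGraph V) :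
    ∃ M : G.Subgraph, M.IsMatching ∧ M.edgeSet.ncard = matchingNumber G :=
  Nat.sSup_mem (s := {n | ∃ M : G.Subgraph, M.IsMatching ∧ M.edgeSet.ncard = n})
    ⟨0, ⊥, fun _ hv => hv.elim, by simp⟩ (bddAbove_ncard_edgeSet_isMatching G)

theorem isMaximumMatching_iff {M : G.Subgraph} :
    IsMaximumMatching M ↔ M.IsMatching ∧ M.edgeSet.ncard = matchingNumber G := by
  refine ⟨fun ⟨hM, hmax⟩ => ⟨hM, hM.ncard_edgeSet_le_matchingNumber.antisymm ?_⟩,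
    fun ⟨hM, hcard⟩ => ⟨hM, fun N hN => hcard ▸ hN.ncard_edgeSet_le_matchingNumber⟩⟩
  obtain ⟨N, hN, hNcard⟩ := exists_isMatching_ncard_edgeSet_eq_matchingNumber G
  exact hNcard ▸ hmax N hN

theorem IsPairing.card_support_le {f : Perm V} (hf : IsPairing G f) :
    #f.support ≤ 2 * matchingNumber G :=
  hf.card_support_eq_two_mul ▸
    Nat.mul_le_mul_left 2 hf.toSubgraph_isMatching.ncard_edgeSet_le_matchingNumber

structure IsMaxPairing (G : SimpleGraph V) (f : Perm V) : Prop extends IsPairing G f where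
  card_support : #f.support = 2 * matchingNumber G

theorem exists_isMaxPairing (G : SimpleGraph V) : ∃ f, IsMaxPairing G f := by
  obtain ⟨M, hM, hcard⟩ := exists_isMatching_ncard_edgeSet_eq_matchingNumber G
  obtain ⟨f, hf, -, hfcard⟩ := hM.exists_isPairing
  exact ⟨f, hf, hcard ▸ hfcard⟩

theorem mem_DSet_iff {v : V} : v ∈ DSet G ↔ ∃ f, IsMaxPairing G f ∧ f v = v := by
  constructor
  · rintro ⟨M, hM, hv⟩
    rw [isMaximumMatching_iff] at hM
    obtain ⟨f, hf, hsupp, hfcard⟩ := hM.1.exists_isPairing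
    exact ⟨f, ⟨hf, hfcard.trans (by rw [hM.2])⟩, not_not.1 fun h => hv ((hsupp v).1 h)⟩
  · rintro ⟨f, hf, hfv⟩
    refine ⟨hf.toSubgraph, isMaximumMatching_iff.2 ⟨hf.toSubgraph_isMatching, ?_⟩,
      fun h => h hfv⟩
    have := hf.card_support_eq_two_mul
    have := hf.card_support
    omega

theorem IsMaxPairing.mem_DSet {f : Perm V} (hf : IsMaxPairing G f) {v : V} (hv : f v = v) :
    v ∈ DSet G :=
  mem_DSet_iff.2 ⟨f, hf, hv⟩

theorem IsMaxPairing.apply_ne_self {f : Perm V} (hf : IsMaxPairing G f) {v : V}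
    (hv : v ∉ DSet G) : f v ≠ v :=
  fun h => hv (hf.mem_DSet h)

theorem exists_isPerfectMatching_iff :
    (∃ M : G.Subgraph, M.IsPerfectMatching) ↔ 2 * matchingNumber G = Fintype.card V := by
  obtain ⟨f, hf⟩ := exists_isMaxPairing G
  constructor
  · rintro ⟨M, hM, hspan⟩
    obtain ⟨g, hg, hsupp, -⟩ := hM.exists_isPairing
    have hg_univ : g.support = univ := eq_univ_of_forall fun v => by
      simpa [hsupp] using hspan v
    have := hg_univ ▸ hg.card_support_le
    have := hf.card_support ▸ card_le_univ f.support
    rw [card_univ] at *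
    omega
  · intro h
    have hf_univ : f.support = univ := eq_univ_of_card _ (hf.card_support.trans h)
    exact ⟨hf.toSubgraph, hf.toSubgraph_isMatching, fun v =>
      Perm.mem_support.1 (hf_univ ▸ mem_univ v)⟩

end MaximumMatchings

section SachsNumber

variable [Fintype V]

noncomputable def sachsNumber (G : SimpleGraph V) : ℕ :=
  (univ.filter (MovesAlongEdges G)).sup fun σ => #σ.support

theorem MovesAlongEdges.card_support_le_sachsNumber {σ : Perm V} (hσ : MovesAlongEdges G σ) :
    #σ.support ≤ sachsNumber G :=
  le_sup (f := fun σ : Perm V => #σ.support) (mem_filter.2 ⟨mem_univ σ, hσ⟩)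

theorem exists_movesAlongEdges_card_support_eq_sachsNumber (G : SimpleGraph V) :
    ∃ σ, MovesAlongEdges G σ ∧ #σ.support = sachsNumber G := by
  obtain ⟨σ, hσ, hsup⟩ := exists_mem_eq_sup (univ.filter (MovesAlongEdges G))
    ⟨1, mem_filter.2 ⟨mem_univ _, fun _ h => (h rfl).elim⟩⟩ fun σ => #σ.support
  exact ⟨σ, (mem_filter.1 hσ).2, hsup.symm⟩

theorem sachsNumber_le_card (G : SimpleGraph V) : sachsNumber G ≤ Fintype.card V :=
  Finset.sup_le fun σ _ => card_le_univ σ.support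

theorem two_mul_matchingNumber_le_sachsNumber (G : SimpleGraph V) :
    2 * matchingNumber G ≤ sachsNumber G := by
  obtain ⟨f, hf⟩ := exists_isMaxPairing G
  exact hf.card_support ▸ hf.movesAlongEdges.card_support_le_sachsNumber

theorem permPoly_eq_sum (G : SimpleGraph V) :
    permPoly G = ∑ σ ∈ univ.filter (MovesAlongEdges G),
      C ((-1) ^ #σ.support) * X ^ (Fintype.card V - #σ.support) := by
  rw [permPoly, Matrix.permanent, sum_filter]
  refine sum_congr rfl fun σ _ => ?_
  simp only [Matrix.sub_apply, Matrix.smul_apply, Matrix.one_apply, Matrix.of_apply, smul_eq_mul,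
    mul_ite, mul_one, mul_zero]
  rw [← prod_mul_prod_compl σ.support]
  have hfixed : ∀ i ∈ σ.supportᶜ,
      ((if σ i = i then X else 0) - if G.Adj (σ i) i then 1 else 0 : ℤ[X]) = X := fun i hi => by
    rw [mem_compl, Perm.notMem_support] at hi
    simp [hi]
  rw [prod_congr rfl hfixed, prod_const, card_compl]
  split_ifs with hσ
  · have hmoved : ∀ i ∈ σ.support,
        ((if σ i = i then X else 0) - if G.Adj (σ i) i then 1 else 0 : ℤ[X]) = -1 :=
      fun i hi => by
        rw [Perm.mem_support] at hi
        simp [hi, (hσ i hi).symm]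
    rw [prod_congr rfl hmoved, prod_const, map_pow, map_neg, map_one]
  · obtain ⟨i, hi, hadj⟩ : ∃ i, σ i ≠ i ∧ ¬G.Adj (σ i) i := by
      simpa [MovesAlongEdges, G.adj_comm] using hσ
    rw [prod_eq_zero (Perm.mem_support.2 hi) (by simp [hi, hadj]), zero_mul]

theorem coeff_permPoly (G : SimpleGraph V) (m : ℕ) :
    (permPoly G).coeff m = ∑ σ ∈ univ.filter (MovesAlongEdges G),
      if m = Fintype.card V - #σ.support then (-1) ^ #σ.support else 0 := by
  simp only [permPoly_eq_sum, finsetSum_coeff, coeff_C_mul_X_pow]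

theorem coeff_permPoly_eq_zero_of_lt {m : ℕ} (hm : m < Fintype.card V - sachsNumber G) :
    (permPoly G).coeff m = 0 := by
  rw [coeff_permPoly]
  exact sum_eq_zero fun σ hσ =>
    if_neg (by have := (mem_filter.1 hσ).2.card_support_le_sachsNumber; omega)

/-- All terms of this degree are `(-1) ^ sachsNumber G`, so none cancel. -/
theorem coeff_permPoly_card_sub_sachsNumber_ne_zero (G : SimpleGraph V) :
    (permPoly G).coeff (Fintype.card V - sachsNumber G) ≠ 0 := by
  have hterm : ∀ σ ∈ univ.filter (MovesAlongEdges G),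
      (if Fintype.card V - sachsNumber G = Fintype.card V - #σ.support then
        (-1 : ℤ) ^ #σ.support else 0) =
      if #σ.support = sachsNumber G then (-1) ^ sachsNumber G else 0 := fun σ hσ => by
    have := (mem_filter.1 hσ).2.card_support_le_sachsNumber
    have := sachsNumber_le_card G
    by_cases h : #σ.support = sachsNumber G
    · simp [h]
    · rw [if_neg (by omega), if_neg h]
  rw [coeff_permPoly, sum_congr rfl hterm, ← sum_filter, sum_const, nsmul_eq_mul]
  obtain ⟨σ, hσ, hcard⟩ := exists_movesAlongEdges_card_support_eq_sachsNumber G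
  refine mul_ne_zero (Nat.cast_ne_zero.2 (card_ne_zero.2 ⟨σ, ?_⟩))
    (pow_ne_zero _ (by norm_num))
  simp [hσ, hcard]

theorem perNullity_eq_card_sub_sachsNumber (G : SimpleGraph V) :
    perNullity G = Fintype.card V - sachsNumber G := by
  have hlead := coeff_permPoly_card_sub_sachsNumber_ne_zero G
  rw [perNullity, rootMultiplicity_eq_natTrailingDegree']
  exact (natTrailingDegree_le_of_ne_zero hlead).antisymm
    (le_natTrailingDegree (fun h => hlead (by rw [h, coeff_zero]))
      fun _ => coeff_permPoly_eq_zero_of_lt)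

end SachsNumber

section Exchange

variable [Fintype V] {f : Perm V}

theorem IsMaxPairing.not_adj_of_apply_eq_self (hf : IsMaxPairing G f) {a b : V} (ha : f a = a)
    (hb : f b = b) : ¬G.Adj a b := fun hab => by
  have hdisj : Perm.Disjoint f (swap a b) := fun v => by
    by_cases hv : v = a ∨ v = b
    · rcases hv with rfl | rfl
      · exact Or.inl ha
      · exact Or.inl hb
    · push Not at hv
      exact Or.inr (swap_apply_of_ne_of_ne hv.1 hv.2)
  have := (hf.toIsPairing.mul_swap ha hb hab).card_support_le
  rw [hdisj.card_support_mul, Perm.card_support_swap hab.ne, hf.card_support] at this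
  omega

/-- The witness is the conjugate of `f` by the transposition `(z w)`. -/
theorem IsMaxPairing.exists_move_gap (hf : IsMaxPairing G f) {z w : V} (hz : f z = z)
    (hw : f w ≠ w) (hadj : G.Adj z (f w)) :
    ∃ f', IsMaxPairing G f' ∧ f' w = w ∧ f' z = f w ∧ f' (f w) = z ∧
      ∀ v, v ≠ z → v ≠ w → v ≠ f w → f' v = f v := by
  have hfwz : f w ≠ z := fun h => hw (by simpa [h, hz] using hf.involutive w)
  set k := swap z w * f * swap z w
  have hkw : k w = w := by simp [k, hz]
  have hkz : k z = f w := by simp [k, swap_apply_of_ne_of_ne hfwz hw]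
  have hkfw : k (f w) = z := by simp [k, swap_apply_of_ne_of_ne hfwz hw, hf.involutive w]
  have hkv (v : V) (hvz : v ≠ z) (hvw : v ≠ w) (hv : v ≠ f w) : k v = f v := by
    have hfvz : f v ≠ z := fun h => hvz (f.injective (h.trans hz.symm))
    have hfvw : f v ≠ w := fun h => hv (by rw [← h, hf.involutive v])
    simp [k, swap_apply_of_ne_of_ne hvz hvw, swap_apply_of_ne_of_ne hfvz hfvw]
  have hk : IsPairing G k := by
    refine ⟨fun v => by simp [k, hf.involutive _], fun v hv => ?_⟩
    by_cases hvz : v = z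
    · exact hvz ▸ hkz ▸ hadj
    by_cases hvw : v = w
    · exact (hv (hvw ▸ hkw)).elim
    by_cases hvfw : v = f w
    · exact hvfw ▸ hkfw ▸ hadj.symm
    rw [hkv v hvz hvw hvfw] at hv ⊢
    exact hf.movesAlongEdges v hv
  have hcard : #k.support = #f.support := by
    simpa [swap_inv] using Perm.card_support_conj (σ := swap z w) (τ := f)
  exact ⟨k, ⟨hk, hcard.trans hf.card_support⟩, hkw, hkz, hkfw, hkv⟩

end Exchange

section Shift

variable [Fintype V] {f : Perm V}

/-- Induction along an alternating path: a maximum pairing `h` missing `z`, where `f z ≠ z`, is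
traded for the maximum pairing `h'` that uses the `f`-edge at `z` instead of the `h`-edge at `f z`
and misses `h (f z)` instead; `h'` agrees with `f` at more vertices than `h`, which bounds the
recursion. -/
theorem IsMaxPairing.induction_on_shift (hf : IsMaxPairing G f) {P : Perm V → V → Prop}
    (base : ∀ h z, f z = z → P h z)
    (step : ∀ h h' z, IsMaxPairing G h → h z = z → f z ≠ z → G.Adj (f z) (h (f z)) →
      h' z = f z → (∀ v, f v = h v → h' v = h v) → P h' (h (f z)) → P h z)
    {h : Perm V} (hh : IsMaxPairing G h) {z : V} (hz : h z = z) : P h z := by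
  by_cases hfz : f z = z
  · exact base h z hfz
  have hza : G.Adj z (f z) := hf.movesAlongEdges z hfz
  have hba : h (f z) ≠ f z := fun hb => hh.not_adj_of_apply_eq_self hz hb hza
  have hhb : h (h (f z)) = f z := hh.involutive _
  obtain ⟨h', hh', h'b, h'z, -, h'v⟩ :=
    hh.exists_move_gap hz (by rwa [hhb, ne_comm]) (by rwa [hhb])
  rw [hhb] at h'z h'v
  have hagree (v : V) (hv : f v = h v) : h' v = h v := by
    obtain ⟨hvz, hva, hvb⟩ := hf.toIsPairing.ne_of_apply_eq hh.toIsPairing hz hfz hv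
    exact h'v v hvz hvb hva
  have hlt : #{v | f v ≠ h' v} < #{v | f v ≠ h v} := by
    refine card_lt_card ((ssubset_iff_of_subset fun v hv => ?_).2 ⟨z, ?_, ?_⟩)
    · simp only [mem_filter, mem_univ, true_and] at hv ⊢
      exact fun hfv => hv (hagree v hfv ▸ hfv)
    · simpa [hz] using hfz
    · simp [h'z]
  exact step h h' z hh hz hfz (hh.movesAlongEdges _ hba) h'z hagree
    (hf.induction_on_shift base step hh' h'b)
termination_by #{v | f v ≠ h v}

end Shift

section DSet

variable [Fintype V] {f : Perm V}

/-- `g` is `f` flipped along the alternating path from `z`, each `f`-edge of which has an end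
in `D(G)`. -/
theorem IsMaxPairing.exists_isMaxPairing_apply_eq_self (hf : IsMaxPairing G f) {h : Perm V}
    (hh : IsMaxPairing G h) {z : V} (hz : h z = z) :
    ∃ g, IsMaxPairing G g ∧ g z = z ∧ (∀ v, f v = h v → g v = f v) ∧
      ∀ v, g v ≠ f v → v ∈ DSet G ∨ f v ∈ DSet G := by
  refine hf.induction_on_shift (P := fun h z => ∃ g, IsMaxPairing G g ∧ g z = z ∧
      (∀ v, f v = h v → g v = f v) ∧ ∀ v, g v ≠ f v → v ∈ DSet G ∨ f v ∈ DSet G)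
    (fun _ _ hfz => ⟨f, hf, hfz, fun _ _ => rfl, fun _ hv => (hv rfl).elim⟩) ?_ hh hz
  rintro h h' z hh hz hfz hab h'z hagree ⟨g, hg, hgb, hgf, hgD⟩
  have hgz : g z = f z := hgf z h'z.symm
  obtain ⟨g', hg', hg'z, -, -, hg'v⟩ :=
    hg.exists_move_gap hgb (hgz ▸ hfz) (hgz ▸ hab.symm)
  refine ⟨g', hg', hg'z, fun v hv => ?_, fun v hv => ?_⟩
  · obtain ⟨hvz, hva, hvb⟩ := hf.toIsPairing.ne_of_apply_eq hh.toIsPairing hz hfz hv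
    rw [hg'v v hvb hvz (hgz ▸ hva), hgf v ((hagree v hv).trans hv.symm).symm]
  · by_cases hvz : v = z
    · exact Or.inl (hvz ▸ hh.mem_DSet hz)
    by_cases hva : v = f z
    · exact Or.inr (by rw [hva, hf.involutive]; exact hh.mem_DSet hz)
    by_cases hvb : v = h (f z)
    · exact Or.inl (hvb ▸ hg.mem_DSet hgb)
    exact hgD v (hg'v v hvb hvz (hgz ▸ hva) ▸ hv)

theorem IsMaxPairing.apply_mem_DSet_of_adj (hf : IsMaxPairing G f) {b u : V} (hb : b ∉ DSet G)
    (hu : u ∈ DSet G) (hbu : G.Adj b u) : f b ∈ DSet G := by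
  obtain ⟨h, hh, hhu⟩ := mem_DSet_iff.1 hu
  obtain ⟨g, hg, hgu, -, hgD⟩ := hf.exists_isMaxPairing_apply_eq_self hh hhu
  by_cases hgb : g b = f b
  · have hgc : g (f b) = b := by rw [← hgb, hg.involutive]
    obtain ⟨g', hg', hg'c, -⟩ := hg.exists_move_gap hgu
      (by rw [hgc]; exact (hf.apply_ne_self hb).symm) (by rw [hgc]; exact hbu.symm)
    exact hg'.mem_DSet hg'c
  · exact (hgD b hgb).resolve_left hb

theorem card_BSet_add_card_compl_DSet_le (G : SimpleGraph V) :
    #{v | v ∈ BSet G} + #{v | v ∉ DSet G} ≤ 2 * matchingNumber G := by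
  obtain ⟨f, hf⟩ := exists_isMaxPairing G
  have hB : #{v | v ∈ BSet G} ≤ #{v ∈ f.support | v ∈ DSet G} := by
    refine card_le_card_of_injOn f (fun b hb => ?_) f.injective.injOn
    obtain ⟨hbD, u, hu, hbu⟩ := (mem_filter.1 hb).2
    have hfb := hf.apply_ne_self hbD
    exact mem_filter.2 ⟨Perm.mem_support.2 (by rwa [hf.involutive, ne_comm]),
      hf.apply_mem_DSet_of_adj hbD hu hbu⟩
  have hnotD : #{v | v ∉ DSet G} = #{v ∈ f.support | v ∉ DSet G} := by
    congr 1
    ext v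
    simpa using fun hv => hf.apply_ne_self hv
  have := f.support.card_filter_add_card_filter_not (· ∈ DSet G)
  rw [← hf.card_support]
  omega

theorem MovesAlongEdges.card_support_le {σ : Perm V} (hσ : MovesAlongEdges G σ)
    (hD : ∀ x ∈ DSet G, ∀ y ∈ DSet G, ¬G.Adj x y) :
    #σ.support ≤ #{v | v ∈ BSet G} + #{v | v ∉ DSet G} := by
  have hB : #{v ∈ σ.support | v ∈ DSet G} ≤ #{v | v ∈ BSet G} := by
    refine card_le_card_of_injOn σ (fun v hv => ?_) σ.injective.injOn
    obtain ⟨hvσ, hvD⟩ := mem_filter.1 hv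
    have hadj := hσ v (Perm.mem_support.1 hvσ)
    exact mem_filter.2 ⟨mem_univ _, fun h => hD v hvD _ h hadj, v, hvD, hadj.symm⟩
  have hnotD : #{v ∈ σ.support | v ∉ DSet G} ≤ #{v | v ∉ DSet G} :=
    card_le_card (filter_subset_filter _ (subset_univ _))
  have := σ.support.card_filter_add_card_filter_not (· ∈ DSet G)
  omega

theorem sachsNumber_le_two_mul_matchingNumber
    (hD : ∀ x ∈ DSet G, ∀ y ∈ DSet G, ¬G.Adj x y) :
    sachsNumber G ≤ 2 * matchingNumber G := by
  obtain ⟨σ, hσ, hcard⟩ := exists_movesAlongEdges_card_support_eq_sachsNumber G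
  exact hcard ▸ (hσ.card_support_le hD).trans (card_BSet_add_card_compl_DSet_le G)

end DSet

section OddCycle

def MovesAlongEdgesExcept (G : SimpleGraph V) (σ : Perm V) (z : V) : Prop :=
  ∀ v, v ≠ z → σ v ≠ v → G.Adj v (σ v)

theorem MovesAlongEdgesExcept.mul_swap {σ : Perm V} {b z : V}
    (hσ : MovesAlongEdgesExcept G σ b) (hadj : G.Adj b (σ z)) :
    MovesAlongEdgesExcept G (σ * swap z b) z := fun v hvz hv => by
  by_cases hvb : v = b
  · subst hvb; simpa using hadj
  · simp only [Perm.mul_apply, swap_apply_of_ne_of_ne hvz hvb] at hv ⊢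
    exact hσ v hvb hv

theorem MovesAlongEdgesExcept.movesAlongEdges {σ : Perm V} {z : V}
    (hσ : MovesAlongEdgesExcept G σ z) (hadj : G.Adj z (σ z)) : MovesAlongEdges G σ :=
  fun v hv => if hvz : v = z then hvz ▸ hadj else hσ v hvz hv

theorem Equiv.Perm.support_subset_support_mul_swap [Fintype V] {σ : Perm V} {b z : V}
    (hb : σ b ≠ z) (hz : σ z ≠ b) : σ.support ⊆ (σ * swap z b).support := fun v hv => by
  rw [Perm.mem_support] at hv ⊢
  by_cases hvz : v = z
  · simpa [hvz] using hb
  by_cases hvb : v = b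
  · simpa [hvb] using hz
  · simpa [swap_apply_of_ne_of_ne hvz hvb] using hv

variable [Fintype V] {f : Perm V}

/-- Following the alternating path of `f` and `h` from `z`: if it does not end at `x`, flipping it
gives the first alternative; if it does, the path, run backwards from `x`, together with `f` off
the path gives the second one. -/
theorem IsMaxPairing.exists_isMaxPairing_or_exists_perm (hf : IsMaxPairing G f) {x : V}
    (hx : f x = x) {h : Perm V} (hh : IsMaxPairing G h) {z : V} (hz : h z = z) (hxz : x ≠ z) :
    (∃ g, IsMaxPairing G g ∧ g x = x ∧ g z = z ∧ ∀ v, f v = h v → g v = f v) ∨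
    ∃ σ : Perm V, σ z = x ∧ MovesAlongEdgesExcept G σ z ∧ f.support ⊆ σ.support ∧
      ∀ v, f v = h v → σ v = f v := by
  refine hf.induction_on_shift (P := fun h z => x ≠ z →
      (∃ g, IsMaxPairing G g ∧ g x = x ∧ g z = z ∧ ∀ v, f v = h v → g v = f v) ∨
      ∃ σ : Perm V, σ z = x ∧ MovesAlongEdgesExcept G σ z ∧ f.support ⊆ σ.support ∧
        ∀ v, f v = h v → σ v = f v)
    (fun _ _ hfz _ => Or.inl ⟨f, hf, hx, hfz, fun _ _ => rfl⟩) ?_ hh hz hxz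
  rintro h h' z hh hz hfz hab h'z hagree ih hxz
  have hne {v : V} (hv : f v = h v) := hf.toIsPairing.ne_of_apply_eq hh.toIsPairing hz hfz hv
  have hextend (σ : Perm V) (hσb : σ (h (f z)) = x) (hσ : MovesAlongEdgesExcept G σ (h (f z)))
      (hσcov : f.support ⊆ σ.support) (hσf : ∀ v, f v = h' v → σ v = f v) :
      ∃ σ : Perm V, σ z = x ∧ MovesAlongEdgesExcept G σ z ∧ f.support ⊆ σ.support ∧
        ∀ v, f v = h v → σ v = f v := by
    have hσz : σ z = f z := hσf z h'z.symm
    refine ⟨σ * swap z (h (f z)), by simp [hσb], hσ.mul_swap (hσz ▸ hab.symm),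
      hσcov.trans (Perm.support_subset_support_mul_swap (hσb ▸ hxz) (hσz ▸ hab.ne)),
      fun v hv => ?_⟩
    obtain ⟨hvz, -, hvb⟩ := hne hv
    simpa [swap_apply_of_ne_of_ne hvz hvb] using hσf v ((hagree v hv).trans hv.symm).symm
  by_cases hbx : h (f z) = x
  · exact Or.inr (hextend f (hbx ▸ hx) (fun v _ => hf.movesAlongEdges v) subset_rfl
      fun _ _ => rfl)
  rcases ih (Ne.symm hbx) with ⟨g, hg, hgx, hgb, hgf⟩ | ⟨σ, hσb, hσ, hσcov, hσf⟩
  · have hgz : g z = f z := hgf z h'z.symm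
    have hxa : x ≠ f z := fun h => hxz (by rw [← hf.involutive z, ← h, hx])
    obtain ⟨g', hg', hg'z, -, -, hg'v⟩ :=
      hg.exists_move_gap hgb (hgz ▸ hfz) (hgz ▸ hab.symm)
    refine Or.inl ⟨g', hg', ?_, hg'z, fun v hv => ?_⟩
    · rw [hg'v x (Ne.symm hbx) hxz (hgz ▸ hxa), hgx]
    · obtain ⟨hvz, hva, hvb⟩ := hne hv
      rw [hg'v v hvb hvz (hgz ▸ hva), hgf v ((hagree v hv).trans hv.symm).symm]
  · exact Or.inr (hextend σ hσb hσ hσcov hσf)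

end OddCycle

theorem two_mul_matchingNumber_add_one_le_sachsNumber [Fintype V] {x z : V} (hx : x ∈ DSet G)
    (hz : z ∈ DSet G) (hxz : G.Adj x z) : 2 * matchingNumber G + 1 ≤ sachsNumber G := by
  obtain ⟨f, hf, hfx⟩ := mem_DSet_iff.1 hx
  obtain ⟨h, hh, hhz⟩ := mem_DSet_iff.1 hz
  rcases hf.exists_isMaxPairing_or_exists_perm hfx hh hhz hxz.ne with
    ⟨g, hg, hgx, hgz, -⟩ | ⟨σ, hσz, hσ, hσcov, -⟩
  · exact (hg.not_adj_of_apply_eq_self hgx hgz hxz).elim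
  have hσx : x ∈ σ.support :=
    Perm.mem_support.2 fun h => hxz.ne (σ.injective (h.trans hσz.symm))
  calc 2 * matchingNumber G + 1 = #(insert x f.support) := by
        rw [card_insert_of_notMem (by simpa using hfx), hf.card_support]
    _ ≤ #σ.support := card_le_card (insert_subset hσx hσcov)
    _ ≤ sachsNumber G := (hσ.movesAlongEdges (hσz ▸ hxz.symm)).card_support_le_sachsNumber

end

theorem stmt8_general {V : Type*} [Fintype V] (G : SimpleGraph V) :
    perNullity G = Fintype.card V - 2 * matchingNumber G ↔
      ((∃ M : G.Subgraph, M.IsPerfectMatching) ∨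
        ∀ x ∈ DSet G, ∀ y ∈ DSet G, ¬ G.Adj x y) := by
  rw [perNullity_eq_card_sub_sachsNumber, exists_isPerfectMatching_iff]
  have hlower := two_mul_matchingNumber_le_sachsNumber G
  have hupper := sachsNumber_le_card G
  constructor
  · refine fun h => Or.inr fun x hx y hy hxy => ?_
    have := two_mul_matchingNumber_add_one_le_sachsNumber hx hy hxy
    omega
  · rintro (hpm | hD)
    · omega
    · have := sachsNumber_le_two_mul_matchingNumber hD
      omega

theorem stmt8 {V : Type*} [Fintype V] (G : SimpleGraph V) (hc : G.Connected) :
    perNullity G = Fintype.card V - 2 * matchingNumber G ↔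
      ((∃ M : G.Subgraph, M.IsPerfectMatching) ∨
        ∀ x ∈ DSet G, ∀ y ∈ DSet G, ¬ G.Adj x y) :=
  stmt8_general G
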